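/- Soundness of the nonrequisite observation criterion: in a single-decision SCIM, if observation X ∈ Pa_D is d-separated from the downstream utility nodes 𝒰^D = 𝒰 ∩ Desc(D) given (Pa_D ∪ {D}) \ {X}, then removing the information link X → D does not decrease the maximum attainable expected utility. -/

import Mathlib

attribute [local instance] Classical.propDecidable

noncomputable section

/-- Acyclicity of a directed graph. -/
def Acyclic {V : Type} (E : V → V → Prop) : Prop := ∀ v, ¬ Relation.TransGen E v v

/-- A walk in the digraph: a nonempty list of vertices where consecutive
vertices are joined by an edge in some direction. -/
def IsWalk {V : Type} (E : V → V → Prop) (p : List V) : Prop :=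
  p ≠ [] ∧ p.Chain' (fun a b => E a b ∨ E b a)

/-- A consecutive triple `a, b, c` blocks a path w.r.t. `S` if `b` is a collider
with no descendant (including itself) in `S`, or a non-collider in `S`. -/
def BlockedTriple {V : Type} (E : V → V → Prop) (S : Set V) (a b c : V) : Prop :=
  (E a b ∧ E c b ∧ ∀ w, Relation.ReflTransGen E b w → w ∉ S) ∨
  (¬ (E a b ∧ E c b) ∧ b ∈ S)

/-- A path is d-separated (blocked) by `S`. -/
def BlocksPath {V : Type} (E : V → V → Prop) (S : Set V) (p : List V) : Prop :=
  (∃ x, p.head? = some x ∧ x ∈ S) ∨ (∃ x, p.getLast? = some x ∧ x ∈ S) ∨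
  (∃ l a b c r, p = l ++ a :: b :: c :: r ∧ BlockedTriple E S a b c)

/-- `A` is d-separated from `B` given `S`. -/
def DSep {V : Type} (E : V → V → Prop) (A B S : Set V) : Prop :=
  ∀ p : List V, IsWalk E p → (∃ a ∈ A, p.head? = some a) →
    (∃ b ∈ B, p.getLast? = some b) → BlocksPath E S p

/-- An observation `X ∈ Pa_D` is requisite in the graph `E` with decision `D` and
utility nodes `U` if it is d-connected to the downstream utilities `U ∩ Desc(D)`
given the other observations and the decision, `(Pa_D ∪ {D}) \ {X}`. -/
def RequisiteG {V : Type} (E : V → V → Prop) (D : V) (U : Set V) (X : V) : Prop :=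
  E X D ∧ ¬ DSep E {X} {u | u ∈ U ∧ Relation.ReflTransGen E D u}
      {v | (E v D ∧ v ≠ X) ∨ v = D}

/-- The edge relation of the minimal reduction: all information links from
nonrequisite observations are removed. -/
def ReducedEdge {V : Type} (E : V → V → Prop) (D : V) (U : Set V) : V → V → Prop :=
  fun a b => E a b ∧ (b = D → RequisiteG E D U a)

variable {V : Type} [Fintype V] [DecidableEq V]

/-- A single-decision structural causal influence model (SCIM): a causal
influence diagram (DAG with a decision node `D` and childless utility nodes
`Util` whose values are interpreted in `ℝ` via `utilReal`), finite nonempty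
domains, structural functions for all non-decision nodes depending only on
parents, and mutually independent finitely-supported exogenous variables. -/
structure SCIM (V : Type) [Fintype V] [DecidableEq V] where
  Edge : V → V → Prop
  acyclic : Acyclic Edge
  D : V
  Util : Finset V
  utilNotD : D ∉ Util
  utilNoChild : ∀ u ∈ Util, ∀ v, ¬ Edge u v
  Dom : V → Type
  domFin : ∀ v, Fintype (Dom v)
  domNE : ∀ v, Nonempty (Dom v)
  utilReal : (u : V) → Dom u → ℝ
  ExoDom : V → Type
  exoFin : ∀ v, Fintype (ExoDom v)
  exoNE : ∀ v, Nonempty (ExoDom v)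
  f : (v : V) → ((p : V) → Dom p) → ExoDom v → Dom v
  localDep : ∀ v a a' e, (∀ p, Edge p v → a p = a' p) → f v a e = f v a' e
  P : (v : V) → ExoDom v → ℝ
  Pnonneg : ∀ v e, 0 ≤ P v e
  Psum : ∀ v, ∑ e ∈ (exoFin v).elems, P v e = 1

namespace SCIM

variable (M : SCIM V)

/-- Joint (product) probability of an exogenous setting. -/
def Pjoint (ε : ∀ v, M.ExoDom v) : ℝ := ∏ v, M.P v (ε v)

/-- All exogenous settings. -/
def exoElems : Finset (∀ v, M.ExoDom v) :=
  letI := M.exoFin; Finset.univ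

/-- A default assignment of values. -/
def dflt : ∀ v, M.Dom v := fun v => (M.domNE v).some

/-- `a` solves the system of structural equations `g` at exogenous setting `ε`. -/
def Solves (g : (v : V) → ((p : V) → M.Dom p) → M.ExoDom v → M.Dom v)
    (ε : ∀ v, M.ExoDom v) (a : ∀ v, M.Dom v) : Prop :=
  ∀ v, a v = g v a (ε v)

/-- The (unique, by acyclicity) solution of the structural equations `g`
at `ε`: the values of all endogenous variables obtained by recursive
application of the structural functions. -/
def sol (g : (v : V) → ((p : V) → M.Dom p) → M.ExoDom v → M.Dom v)
    (ε : ∀ v, M.ExoDom v) : ∀ v, M.Dom v :=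
  if h : ∃ a, M.Solves g ε a then h.choose else M.dflt

/-- Replace the structural function at node `X` by `gX` (a soft intervention). -/
def replaceAt (g : (v : V) → ((p : V) → M.Dom p) → M.ExoDom v → M.Dom v) (X : V)
    (gX : ((p : V) → M.Dom p) → M.ExoDom X → M.Dom X) :
    (v : V) → ((p : V) → M.Dom p) → M.ExoDom v → M.Dom v :=
  fun v => if h : v = X then (by subst h; exact gX) else g v

/-- Hard intervention do(`X` = `x`): constant functions on `X`. -/
def doSet (g : (v : V) → ((p : V) → M.Dom p) → M.ExoDom v → M.Dom v)
    (X : Set V) (x : ∀ v, M.Dom v) :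
    (v : V) → ((p : V) → M.Dom p) → M.ExoDom v → M.Dom v :=
  fun v => if v ∈ X then fun _ _ => x v else g v

/-- A policy: a structural function for `D` that depends only on the
observations `Pa_D` (and the exogenous variable of `D`). -/
def IsPolicy (π : ((p : V) → M.Dom p) → M.ExoDom M.D → M.Dom M.D) : Prop :=
  ∀ a a' e, (∀ p, M.Edge p M.D → a p = a' p) → π a e = π a' e

/-- The policy-completed system of structural functions. -/
def gpol (π : ((p : V) → M.Dom p) → M.ExoDom M.D → M.Dom M.D) :
    (v : V) → ((p : V) → M.Dom p) → M.ExoDom v → M.Dom v :=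
  M.replaceAt M.f M.D π

/-- Total utility of an assignment: the sum of the utility-node values. -/
def TotalU (a : ∀ v, M.Dom v) : ℝ := ∑ u ∈ M.Util, M.utilReal u (a u)

/-- Expected total utility of a system of structural equations `g`. -/
def EUg (g : (v : V) → ((p : V) → M.Dom p) → M.ExoDom v → M.Dom v) : ℝ :=
  ∑ ε ∈ M.exoElems, M.Pjoint ε * M.TotalU (M.sol g ε)

/-- Expected total utility of a policy. -/
def EU (π : ((p : V) → M.Dom p) → M.ExoDom M.D → M.Dom M.D) : ℝ :=
  M.EUg (M.gpol π)

/-- An optimal policy maximizes expected total utility. -/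
def IsOptimal (π : ((p : V) → M.Dom p) → M.ExoDom M.D → M.Dom M.D) : Prop :=
  M.IsPolicy π ∧ ∀ π', M.IsPolicy π' → M.EU π' ≤ M.EU π

/-- Probability of an event over exogenous settings. -/
def PrEv (Ev : (∀ v, M.ExoDom v) → Prop) : ℝ :=
  ∑ ε ∈ M.exoElems, if Ev ε then M.Pjoint ε else 0

/-- Conditional expectation of `h` given the event `Ev`. -/
def condExp (h : (∀ v, M.ExoDom v) → ℝ) (Ev : (∀ v, M.ExoDom v) → Prop) : ℝ :=
  (∑ ε ∈ M.exoElems, if Ev ε then M.Pjoint ε * h ε else 0) / M.PrEv Ev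

/-- Conditional probability of `h` given `Ev`. -/
def condProb (h Ev : (∀ v, M.ExoDom v) → Prop) : ℝ :=
  M.PrEv (fun ε => h ε ∧ Ev ε) / M.PrEv Ev

/-- The event that the decision context (the observations `Pa_D`) takes the
values `pa`, under policy `π`. -/
def CtxEvent (π : ((p : V) → M.Dom p) → M.ExoDom M.D → M.Dom M.D)
    (pa : ∀ v, M.Dom v) (ε : ∀ v, M.ExoDom v) : Prop :=
  ∀ p, M.Edge p M.D → M.sol (M.gpol π) ε p = pa p

/-- The potential response under the hard intervention do(`X` = `x`),
in the policy-completed model: an assignment to all variables. -/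
def response (π : ((p : V) → M.Dom p) → M.ExoDom M.D → M.Dom M.D)
    (X : V) (x : M.Dom X) (ε : ∀ v, M.ExoDom v) : ∀ v, M.Dom v :=
  M.sol (M.doSet (M.gpol π) {X} (Function.update M.dflt X x)) ε

/-- The nested-counterfactual assignment realizing `U_{X_d}`: intervene on `X`
with the value `X_d(ε)` it would take under do(`D` = `d`). -/
def nestedSol (π : ((p : V) → M.Dom p) → M.ExoDom M.D → M.Dom M.D)
    (X : V) (d : M.Dom M.D) (ε : ∀ v, M.ExoDom v) : ∀ v, M.Dom v :=
  M.response π X (M.response π M.D d ε X) ε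

/-- Instrumental control incentive on `X`: in some decision context `pa`
(of positive probability), every optimal policy has
`E[U_{X_d} | pa] ≠ E[U | pa]` for some `d`. -/
def HasICI (X : V) : Prop :=
  ∃ pa : ∀ v, M.Dom v, ∀ π, M.IsOptimal π →
    0 < M.PrEv (M.CtxEvent π pa) ∧
    ∃ d : M.Dom M.D,
      M.condExp (fun ε => M.TotalU (M.nestedSol π X d ε)) (M.CtxEvent π pa) ≠
      M.condExp (fun ε => M.TotalU (M.sol (M.gpol π) ε)) (M.CtxEvent π pa)

/-- A policy that does not use the information link `X → D`. -/
def IsPolicyWithout (X : V)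
    (π : ((p : V) → M.Dom p) → M.ExoDom M.D → M.Dom M.D) : Prop :=
  M.IsPolicy π ∧ ∀ a a' e, (∀ p, M.Edge p M.D → p ≠ X → a p = a' p) → π a e = π a' e

/-- Counterfactual fairness of policy `π` w.r.t. sensitive attribute `A`:
`Pr(D_{a'} = d | pa_D, a) = Pr(D = d | pa_D, a)` for all `d`, contexts `pa_D`,
and attribute values `a, a'` with positive probability of the conditioning event. -/
def CFair (π : ((p : V) → M.Dom p) → M.ExoDom M.D → M.Dom M.D) (A : V) : Prop :=
  ∀ (d : M.Dom M.D) (pa : ∀ v, M.Dom v) (a a' : M.Dom A),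
    0 < M.PrEv (fun ε => M.CtxEvent π pa ε ∧ M.sol (M.gpol π) ε A = a) →
    M.condProb (fun ε => M.response π A a' ε M.D = d)
        (fun ε => M.CtxEvent π pa ε ∧ M.sol (M.gpol π) ε A = a) =
    M.condProb (fun ε => M.sol (M.gpol π) ε M.D = d)
        (fun ε => M.CtxEvent π pa ε ∧ M.sol (M.gpol π) ε A = a)

end SCIM

/-!
Fix the value `e` of the exogenous variable of `D` and the values `y` of the other observations
`Pa_D \ {X}`. Under the intervention do(`D = d`), d-separation makes the joint law of the
ancestral variables factorise across a separator of their moral graph, so `X` is independent of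
the downstream utilities given the context. Hence the expected downstream utility in context
`(y, e)` with `X = x` and `D = d` is the conditional probability of `X = x` times a context value
`V(y, e, d)` that does not involve `x`. The policy that in each context plays the decision `π`
takes at the `x` maximising `V` therefore does at least as well as `π`, and it does not read `X`;
the upstream utilities do not depend on the decision at all.
-/

attribute [local instance] SCIM.domFin SCIM.exoFin SCIM.domNE SCIM.exoNE

open Finset Function

section PiSums

variable {ι : Type*} {B : ι → Type*}

def agreeInd (T : Set ι) (y z : ∀ i, B i) : ℝ := if ∀ i ∈ T, z i = y i then 1 else 0

theorem agreeInd_nonneg (T : Set ι) (y z : ∀ i, B i) : 0 ≤ agreeInd T y z := by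
  unfold agreeInd; split_ifs <;> norm_num

theorem dependsOn_agreeInd (T : Set ι) (y : ∀ i, B i) : DependsOn (agreeInd T y) T := by
  intro z z' hzz'
  unfold agreeInd
  congr 1
  exact propext <| forall₂_congr fun i hi => by rw [hzz' i hi]

theorem agreeInd_congr {T : Set ι} {y y' : ∀ i, B i} (h : ∀ i ∈ T, y i = y' i) :
    agreeInd T y = agreeInd T y' := by
  ext z
  simp only [agreeInd]
  congr 1
  exact propext <| forall₂_congr fun i hi => by rw [h i hi]

theorem DependsOn.mul {T : Set ι} {f g : (∀ i, B i) → ℝ} (hf : DependsOn f T)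
    (hg : DependsOn g T) : DependsOn (fun z => f z * g z) T :=
  fun _ _ h => congrArg₂ (· * ·) (hf h) (hg h)

theorem dependsOn_prod {κ : Type*} {s : Finset κ} {T : Set ι} {f : κ → (∀ i, B i) → ℝ}
    (hf : ∀ k ∈ s, DependsOn (f k) T) : DependsOn (fun z => ∏ k ∈ s, f k z) T :=
  fun _ _ h => prod_congr rfl fun k hk => hf k hk h

variable [Fintype ι] [DecidableEq ι] [∀ i, Fintype (B i)]

theorem sum_agreeInd (T : Set ι) (z : ∀ i, B i) :
    ∑ y, agreeInd T y z = ∏ i, if i ∈ T then 1 else (Fintype.card (B i) : ℝ) := by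
  have hfilter : univ.filter (fun y : ∀ i, B i => ∀ i ∈ T, z i = y i) =
      Fintype.piFinset fun i => if i ∈ T then {z i} else univ := by
    ext y
    simp only [mem_filter, mem_univ, true_and, Fintype.mem_piFinset]
    refine forall_congr' fun i => ?_
    split_ifs with hi <;> simp [hi, eq_comm]
  rw [show ∑ y, agreeInd T y z =
      ((univ.filter fun y : ∀ i, B i => ∀ i ∈ T, z i = y i).card : ℝ) by
    unfold agreeInd; convert sum_boole _ _, hfilter, Fintype.card_piFinset, Nat.cast_prod]
  refine prod_congr rfl fun i _ => ?_
  split_ifs <;> simp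

/-- Under a weight `G` pinning the coordinates in `P`, a factor living on `L ∪ P` and a factor
living off `L` are independent. -/
theorem sum_mul_sum_swap (L P : Set ι) {G a₁ a₂ b₁ b₂ : (∀ i, B i) → ℝ}
    (hG : DependsOn G P) (hpin : ∀ z z', G z ≠ 0 → G z' ≠ 0 → ∀ i ∈ P, z i = z' i)
    (ha₁ : DependsOn a₁ (L ∪ P)) (ha₂ : DependsOn a₂ (L ∪ P))
    (hb₁ : DependsOn b₁ Lᶜ) (hb₂ : DependsOn b₂ Lᶜ) :
    (∑ z, G z * a₁ z * b₁ z) * (∑ z, G z * a₂ z * b₂ z) =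
      (∑ z, G z * a₂ z * b₁ z) * (∑ z, G z * a₁ z * b₂ z) := by
  set mix : (∀ i, B i) → (∀ i, B i) → ∀ i, B i := fun z z' => (L ∪ P).piecewise z z'
  have mix_of_mem : ∀ z z', ∀ i ∈ L ∪ P, mix z z' i = z i := fun z z' i hi =>
    Set.piecewise_eq_of_mem _ _ _ hi
  have mix_of_notMem : ∀ z z', ∀ i ∉ L ∪ P, mix z z' i = z' i := fun z z' i hi =>
    Set.piecewise_eq_of_notMem _ _ _ hi
  have hinv : Involutive fun p : (∀ i, B i) × (∀ i, B i) => (mix p.1 p.2, mix p.2 p.1) := by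
    rintro ⟨z, z'⟩
    ext i <;> by_cases hi : i ∈ L ∪ P <;> simp [mix_of_mem, mix_of_notMem, hi]
  -- exchanging the `L ∪ P`-parts of two configurations exchanges `a₁` and `a₂`
  have key : ∀ z z', G (mix z z') * a₁ (mix z z') * b₁ (mix z z') *
      (G (mix z' z) * a₂ (mix z' z) * b₂ (mix z' z)) =
      G z' * a₂ z' * b₁ z' * (G z * a₁ z * b₂ z) := by
    intro z z'
    rw [hG fun i hi => mix_of_mem z z' i (.inr hi), hG fun i hi => mix_of_mem z' z i (.inr hi),
      ha₁ (mix_of_mem z z'), ha₂ (mix_of_mem z' z)]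
    by_cases hz : G z = 0
    · simp [hz]
    by_cases hz' : G z' = 0
    · simp [hz']
    have hoff : ∀ w w', (∀ i ∈ P, w i = w' i) → ∀ i ∈ Lᶜ, mix w w' i = w' i := by
      intro w w' hww' i hi
      by_cases hiP : i ∈ P
      · rw [mix_of_mem w w' i (.inr hiP), hww' i hiP]
      · exact mix_of_notMem w w' i (by simp_all)
    rw [hb₁ (hoff z z' (hpin z z' hz hz')), hb₂ (hoff z' z (hpin z' z hz' hz))]
    ring
  calc (∑ z, G z * a₁ z * b₁ z) * (∑ z, G z * a₂ z * b₂ z)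
      = ∑ p : (∀ i, B i) × (∀ i, B i),
          G p.1 * a₁ p.1 * b₁ p.1 * (G p.2 * a₂ p.2 * b₂ p.2) := by
        rw [sum_mul_sum, Fintype.sum_prod_type]
    _ = ∑ p : (∀ i, B i) × (∀ i, B i),
          G p.2 * a₂ p.2 * b₁ p.2 * (G p.1 * a₁ p.1 * b₂ p.1) := by
        rw [← Equiv.sum_comp hinv.toPerm]
        exact sum_congr rfl fun p _ => key p.1 p.2
    _ = (∑ z, G z * a₂ z * b₁ z) * (∑ z, G z * a₁ z * b₂ z) := by
        rw [sum_mul_sum, Fintype.sum_prod_type, sum_comm]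

end PiSums

section Moralization

variable {α : Type} {E : α → α → Prop} {S B : Set α} {X : α}

def ancestors (E : α → α → Prop) (T : Set α) : Set α :=
  {v | ∃ t ∈ T, Relation.ReflTransGen E v t}

theorem mem_ancestors_of_edge {T : Set α} {p v : α} (hpv : E p v) (hv : v ∈ ancestors E T) :
    p ∈ ancestors E T := by
  obtain ⟨t, ht, hvt⟩ := hv
  exact ⟨t, ht, hvt.head hpv⟩

def NoBlockedTriple (E : α → α → Prop) (S : Set α) : List α → Prop
  | a :: b :: c :: r => ¬ BlockedTriple E S a b c ∧ NoBlockedTriple E S (b :: c :: r)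
  | _ => True

theorem NoBlockedTriple.of_cons {w : α} {l : List α} (h : NoBlockedTriple E S (w :: l)) :
    NoBlockedTriple E S l := by
  match l, h with
  | [], _ | [_], _ => trivial
  | _ :: _ :: _, h => exact h.2

theorem NoBlockedTriple.not_blockedTriple {a b c : α} {r : List α} :
    ∀ l : List α, NoBlockedTriple E S (l ++ a :: b :: c :: r) → ¬ BlockedTriple E S a b c
  | [], h => h.1
  | _ :: l, h => NoBlockedTriple.not_blockedTriple l h.of_cons

theorem BlockedTriple.symm {a b c : α} (h : BlockedTriple E S a b c) :
    BlockedTriple E S c b a := by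
  rcases h with ⟨hab, hcb, hdesc⟩ | ⟨hcol, hb⟩
  · exact .inl ⟨hcb, hab, hdesc⟩
  · exact .inr ⟨fun h => hcol h.symm, hb⟩

theorem not_blockedTriple_of_notMem {a b c : α} (hb : b ∉ S)
    (hdesc : ∃ w, Relation.ReflTransGen E b w ∧ w ∈ S) : ¬ BlockedTriple E S a b c := by
  obtain ⟨w, hbw, hw⟩ := hdesc
  rintro (⟨-, -, hnot⟩ | ⟨-, hb'⟩)
  exacts [hnot w hbw hw, hb hb']

theorem not_blockedTriple_of_collider {a b c : α} (hab : E a b) (hcb : E c b)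
    (hdesc : ∃ w, Relation.ReflTransGen E b w ∧ w ∈ S) : ¬ BlockedTriple E S a b c := by
  obtain ⟨w, hbw, hw⟩ := hdesc
  rintro (⟨-, -, hnot⟩ | ⟨hcol, -⟩)
  exacts [hnot w hbw hw, hcol ⟨hab, hcb⟩]

theorem not_blockedTriple_of_edge (hE : Acyclic E) {a b c : α} (hba : E b a) (hb : b ∉ S) :
    ¬ BlockedTriple E S a b c := by
  rintro (⟨hab, -, -⟩ | ⟨-, hb'⟩)
  exacts [hE b (.tail (.single hba) hab), hb hb']

-- Walks are listed towards `X`, so that they are extended by prepending.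
def IsActiveWalk (E : α → α → Prop) (S : Set α) (X : α) (l : List α) : Prop :=
  IsWalk E l ∧ l.getLast? = some X ∧ NoBlockedTriple E S l

theorem IsActiveWalk.cons {v w : α} {t : List α} (h : IsActiveWalk E S X (v :: t))
    (hwv : E w v ∨ E v w) (hfree : ∀ c ∈ t.head?, ¬ BlockedTriple E S w v c) :
    IsActiveWalk E S X (w :: v :: t) := by
  obtain ⟨⟨-, hchain⟩, hlast, hfree'⟩ := h
  refine ⟨⟨List.cons_ne_nil _ _, hchain.cons_cons hwv⟩, by rwa [List.getLast?_cons_cons],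
    ?_⟩
  cases t with
  | nil => trivial
  | cons c t => exact ⟨hfree c rfl, hfree'⟩

def HasActiveWalk (E : α → α → Prop) (S : Set α) (v X : α) : Prop :=
  ∃ t, IsActiveWalk E S X (v :: t)

theorem HasActiveWalk.cons {v w : α} (h : HasActiveWalk E S v X) (hwv : E w v ∨ E v w)
    (hfree : ∀ c, ¬ BlockedTriple E S w v c) : HasActiveWalk E S w X :=
  let ⟨t, ht⟩ := h
  ⟨v :: t, ht.cons hwv fun c _ => hfree c⟩

theorem HasActiveWalk.of_reflTransGen (hE : Acyclic E) {c u : α} (h : HasActiveWalk E S c X)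
    (hnot : ∀ w, Relation.ReflTransGen E c w → w ∉ S) (hcu : Relation.ReflTransGen E c u) :
    HasActiveWalk E S u X := by
  induction hcu with
  | refl => exact h
  | tail hcb hbu ih =>
    exact ih.cons (.inr hbu) fun _ => not_blockedTriple_of_edge hE hbu (hnot _ hcb)

theorem not_hasActiveWalk_of_dSep (hsep : DSep E {X} B S) (hX : X ∉ S) {u : α} (hu : u ∈ B)
    (huS : u ∉ S) : ¬ HasActiveWalk E S u X := by
  rintro ⟨t, ⟨-, hchain⟩, hlast, hfree⟩
  have hwalk : IsWalk E (u :: t).reverse :=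
    ⟨by simp, List.isChain_reverse.2 (hchain.imp fun _ _ h => h.symm)⟩
  rcases hsep _ hwalk ⟨X, rfl, by rwa [List.head?_reverse]⟩ ⟨u, hu, by simp⟩ with
    ⟨x, hx, hxS⟩ | ⟨x, hx, hxS⟩ | ⟨l, a, b, c, r, hl, hblocked⟩
  · rw [List.head?_reverse, hlast, Option.some_inj] at hx
    exact hX (hx ▸ hxS)
  · simp only [List.getLast?_reverse, List.head?_cons, Option.some_inj] at hx
    exact huS (hx ▸ hxS)
  · have hrev : u :: t = r.reverse ++ c :: b :: a :: l.reverse := by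
      simpa using congrArg List.reverse hl
    exact (hrev ▸ hfree).not_blockedTriple _ hblocked.symm

theorem exists_desc_mem_of_hasActiveWalk (hE : Acyclic E) (hsep : DSep E {X} B S) (hX : X ∉ S)
    {v : α} (hv : v ∈ ancestors E (S ∪ B)) (h : HasActiveWalk E S v X) :
    ∃ w, Relation.ReflTransGen E v w ∧ w ∈ S := by
  by_contra! hnot
  obtain ⟨t, ht | ht, hvt⟩ := hv
  · exact hnot t hvt ht
  · exact not_hasActiveWalk_of_dSep hsep hX ht (hnot t hvt) (h.of_reflTransGen hE hnot hvt)

/-- Adjacency in the moral graph of `A`, restricted to the vertices of `A` outside `S`. -/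
def MoralStep (E : α → α → Prop) (S A : Set α) (v w : α) : Prop :=
  v ∈ A \ S ∧ w ∈ A \ S ∧ (E v w ∨ E w v ∨ ∃ c ∈ A, E v c ∧ E w c)

theorem HasActiveWalk.moralStep (hE : Acyclic E) (hsep : DSep E {X} B S) (hX : X ∉ S) {v w : α}
    (h : HasActiveWalk E S v X) (hvw : MoralStep E S (ancestors E (S ∪ B)) v w) :
    HasActiveWalk E S w X := by
  obtain ⟨⟨hvA, hvS⟩, -, hadj⟩ := hvw
  have hvfree : ∀ a c, ¬ BlockedTriple E S a v c := fun _ _ =>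
    not_blockedTriple_of_notMem hvS (exists_desc_mem_of_hasActiveWalk hE hsep hX hvA h)
  rcases hadj with hvw | hwv | ⟨c, hcA, hvc, hwc⟩
  · exact h.cons (.inr hvw) (hvfree w)
  · exact h.cons (.inl hwv) (hvfree w)
  · obtain ⟨t, ht⟩ := h
    have hc : IsActiveWalk E S X (c :: v :: t) := ht.cons (.inr hvc) fun _ _ => hvfree c _
    have hcdesc := exists_desc_mem_of_hasActiveWalk hE hsep hX hcA ⟨_, hc⟩
    exact ⟨_, hc.cons (.inl hwc) fun v' hv' => by
      cases hv'
      exact not_blockedTriple_of_collider hwc hvc hcdesc⟩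

/-- `W` is the set of vertices reachable from `X` in the moral graph of the ancestral set with
`S` deleted; d-separation keeps `B` out of it. -/
theorem exists_moral_separator (hE : Acyclic E) (hsep : DSep E {X} B S) (hX : X ∉ S)
    (hXA : X ∈ ancestors E (S ∪ B)) :
    ∃ W : Set α, X ∈ W ∧ W ⊆ ancestors E (S ∪ B) \ S ∧ (∀ u ∈ B, u ∉ W) ∧
      ∀ v ∈ ancestors E (S ∪ B),
        insert v {p | E p v} ⊆ W ∪ S ∨ insert v {p | E p v} ⊆ Wᶜ := by
  set A := ancestors E (S ∪ B)
  set W := {v | Relation.ReflTransGen (MoralStep E S A) X v}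
  have hWA : W ⊆ A \ S := fun v hv => by
    rcases Relation.ReflTransGen.cases_tail hv with rfl | ⟨_, -, hstep⟩
    exacts [⟨hXA, hX⟩, hstep.2.1]
  have hstep : ∀ {v w}, v ∈ W → w ∈ A \ S →
      (E v w ∨ E w v ∨ ∃ c ∈ A, E v c ∧ E w c) → w ∈ W :=
    fun hv hw hadj => Relation.ReflTransGen.tail hv ⟨hWA hv, hw, hadj⟩
  have hwalk : ∀ v ∈ W, HasActiveWalk E S v X := fun v hv => by
    induction hv with
    | refl => exact ⟨[], ⟨by simp, List.isChain_singleton X⟩, rfl, trivial⟩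
    | tail _ hvw ih => exact ih.moralStep hE hsep hX hvw
  refine ⟨W, .refl, hWA, fun u hu huW => ?_, fun v hvA => ?_⟩
  · exact not_hasActiveWalk_of_dSep hsep hX hu (hWA huW).2 (hwalk u huW)
  have hpA : ∀ {p}, E p v → p ∈ A := fun hp => mem_ancestors_of_edge hp hvA
  by_cases hin : v ∈ W ∨ (v ∈ S ∧ ∃ p₀ ∈ W, E p₀ v)
  · refine .inl ?_
    rintro p (rfl | hp)
    · rcases hin with hv | ⟨hv, -⟩
      exacts [.inl hv, .inr hv]
    by_cases hpS : p ∈ S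
    · exact .inr hpS
    refine .inl ?_
    rcases hin with hv | ⟨-, p₀, hp₀, hp₀v⟩
    · exact hstep hv ⟨hpA hp, hpS⟩ (.inr (.inl hp))
    · exact hstep hp₀ ⟨hpA hp, hpS⟩ (.inr (.inr ⟨v, hvA, hp₀v, hp⟩))
  · push Not at hin
    refine .inr ?_
    rintro p (rfl | hp) hpW
    · exact hin.1 hpW
    by_cases hvS : v ∈ S
    · exact hin.2 hvS p hpW hp
    · exact hin.1 (hstep hpW ⟨hvA, hvS⟩ (.inl hp))

end Moralization

namespace SCIM

variable (M : SCIM V)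

abbrev Equations : Type := (v : V) → ((p : V) → M.Dom p) → M.ExoDom v → M.Dom v

abbrev DecisionRule : Type := ((p : V) → M.Dom p) → M.ExoDom M.D → M.Dom M.D

def IsLocal (g : M.Equations) : Prop :=
  ∀ v a a' e, (∀ p, M.Edge p v → a p = a' p) → g v a e = g v a' e

theorem wellFounded_transGen : WellFounded (Relation.TransGen M.Edge) := by
  have : IsTrans V (Relation.TransGen M.Edge) := ⟨fun _ _ _ => .trans⟩
  have : Std.Irrefl (Relation.TransGen M.Edge) := ⟨M.acyclic⟩
  exact Finite.wellFounded_of_trans_of_irrefl _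

theorem ne_of_edge {p v : V} (h : M.Edge p v) : p ≠ v := by
  rintro rfl
  exact M.acyclic p (.single h)

theorem not_desc_of_edge_D {p : V} (h : M.Edge p M.D) : ¬ Relation.ReflTransGen M.Edge M.D p :=
  fun hDp => M.acyclic M.D (.tail' hDp h)

theorem exists_solves {g} (hg : M.IsLocal g) (ε : ∀ v, M.ExoDom v) : ∃ a, M.Solves g ε a := by
  let F (v : V) (rec : ∀ p, Relation.TransGen M.Edge p v → M.Dom p) : M.Dom v :=
    g v (fun p => if h : Relation.TransGen M.Edge p v then rec p h else M.dflt p) (ε v)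
  refine ⟨M.wellFounded_transGen.fix F, fun v => ?_⟩
  rw [M.wellFounded_transGen.fix_eq F v]
  exact hg v _ _ _ fun p hp => by rw [dif_pos (.single hp)]

theorem eq_of_solves {g} (hg : M.IsLocal g) {ε a b} (ha : M.Solves g ε a)
    (hb : M.Solves g ε b) : a = b := by
  funext v
  induction v using M.wellFounded_transGen.induction with
  | _ v ih =>
    rw [ha v, hb v]
    exact hg v a b (ε v) fun p hp => ih p (.single hp)

theorem sol_solves {g} (hg : M.IsLocal g) (ε : ∀ v, M.ExoDom v) :
    M.Solves g ε (M.sol g ε) := by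
  have h := M.exists_solves hg ε
  rw [sol, dif_pos h]
  exact h.choose_spec

theorem sol_eq_of_solves {g} (hg : M.IsLocal g) {ε a} (ha : M.Solves g ε a) : M.sol g ε = a :=
  M.eq_of_solves hg (M.sol_solves hg ε) ha

theorem sol_eq_sol_of_eqOn {g g'} (hg : M.IsLocal g) (hg' : M.IsLocal g') {A : Set V}
    (hA : ∀ p v, M.Edge p v → v ∈ A → p ∈ A) (hgg' : ∀ v ∈ A, g v = g' v)
    (ε : ∀ v, M.ExoDom v) {v : V} (hv : v ∈ A) : M.sol g ε v = M.sol g' ε v := by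
  induction v using M.wellFounded_transGen.induction with
  | _ v ih =>
    rw [M.sol_solves hg ε v, M.sol_solves hg' ε v, hgg' v hv]
    exact hg' v _ _ _ fun p hp => ih p (.single hp) (hA p v hp hv)

theorem gpol_self (π : M.DecisionRule) : M.gpol π M.D = π := by
  simp [gpol, replaceAt]

theorem gpol_of_ne (π : M.DecisionRule) {v : V} (hv : v ≠ M.D) :
    M.gpol π v = M.f v :=
  dif_neg hv

theorem isLocal_gpol {π} (hπ : M.IsPolicy π) : M.IsLocal (M.gpol π) := by
  intro v a a' e hv
  by_cases hvD : v = M.D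
  · subst hvD
    rw [gpol_self]
    exact hπ a a' e hv
  · rw [M.gpol_of_ne π hvD]
    exact M.localDep v a a' e hv

theorem isPolicy_const (d : M.Dom M.D) : M.IsPolicy fun _ _ => d :=
  fun _ _ _ _ => rfl

def solDo (d : M.Dom M.D) : (∀ v, M.ExoDom v) → ∀ v, M.Dom v :=
  M.sol (M.gpol fun _ _ => d)

theorem not_desc_of_edge {p v : V} (hpv : M.Edge p v)
    (hv : ¬ Relation.ReflTransGen M.Edge M.D v) : ¬ Relation.ReflTransGen M.Edge M.D p :=
  fun hDp => hv (hDp.tail hpv)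

theorem sol_gpol_eq_of_not_desc {π π'} (hπ : M.IsPolicy π) (hπ' : M.IsPolicy π')
    (ε : ∀ v, M.ExoDom v) {v : V} (hv : ¬ Relation.ReflTransGen M.Edge M.D v) :
    M.sol (M.gpol π) ε v = M.sol (M.gpol π') ε v := by
  refine M.sol_eq_sol_of_eqOn (M.isLocal_gpol hπ) (M.isLocal_gpol hπ')
    (fun _ _ => M.not_desc_of_edge) (fun w hw => ?_) ε hv
  have hwD : w ≠ M.D := fun h => hw (h ▸ .refl)
  rw [M.gpol_of_ne π hwD, M.gpol_of_ne π' hwD]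

theorem solDo_eq_of_not_desc (d d' : M.Dom M.D) (ε : ∀ v, M.ExoDom v) {v : V}
    (hv : ¬ Relation.ReflTransGen M.Edge M.D v) : M.solDo d ε v = M.solDo d' ε v :=
  M.sol_gpol_eq_of_not_desc (M.isPolicy_const d) (M.isPolicy_const d') ε hv

/-- The policy sees only non-descendants of `D`, whose values do not depend on the decision. -/
theorem sol_gpol_eq_solDo {π} (hπ : M.IsPolicy π) (d₀ : M.Dom M.D) (ε : ∀ v, M.ExoDom v) :
    M.sol (M.gpol π) ε = M.solDo (π (M.solDo d₀ ε) (ε M.D)) ε := by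
  have hsol := M.sol_solves (M.isLocal_gpol hπ) ε
  have hD : M.sol (M.gpol π) ε M.D = π (M.solDo d₀ ε) (ε M.D) := by
    rw [hsol M.D, gpol_self]
    exact hπ _ _ _ fun p hp => M.sol_gpol_eq_of_not_desc hπ (M.isPolicy_const d₀) ε
      (M.not_desc_of_edge_D hp)
  refine (M.sol_eq_of_solves (M.isLocal_gpol (M.isPolicy_const _)) fun v => ?_).symm
  by_cases hv : v = M.D
  · subst hv
    rw [gpol_self, hD]
  · rw [M.gpol_of_ne _ hv, hsol v, M.gpol_of_ne _ hv]

/-- Weight, under exogenous weights `w`, of node `v` taking the value `z v` when the other nodes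
take the values `z`. -/
def kernel (w : ∀ v, M.ExoDom v → ℝ) (g : M.Equations) (v : V) (z : ∀ p, M.Dom p) : ℝ :=
  ∑ c, if z v = g v z c then w v c else 0

theorem prod_kernel (w : ∀ v, M.ExoDom v → ℝ) (g) (z : ∀ v, M.Dom v) :
    ∏ v, M.kernel w g v z = ∑ ε, if M.Solves g ε z then ∏ v, w v (ε v) else 0 := by
  simp only [kernel]
  rw [prod_univ_sum, Fintype.piFinset_univ]
  exact sum_congr rfl fun ε _ => by rw [Fintype.prod_ite_zero]; exact if_congr Iff.rfl rfl rfl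

theorem sum_prod_mul_sol (w : ∀ v, M.ExoDom v → ℝ) {g} (hg : M.IsLocal g)
    (h : (∀ v, M.Dom v) → ℝ) :
    ∑ ε, (∏ v, w v (ε v)) * h (M.sol g ε) = ∑ z, (∏ v, M.kernel w g v z) * h z := by
  have hsolves : ∀ ε z, M.Solves g ε z ↔ M.sol g ε = z := fun ε z =>
    ⟨M.sol_eq_of_solves hg, fun h => h ▸ M.sol_solves hg ε⟩
  simp_rw [prod_kernel, sum_mul, ite_mul, zero_mul, hsolves]
  rw [sum_comm]
  exact sum_congr rfl fun ε _ => by rw [sum_ite_eq]; simp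

theorem dependsOn_kernel (w : ∀ v, M.ExoDom v → ℝ) {g} (hg : M.IsLocal g) (v : V) :
    DependsOn (M.kernel w g v) (insert v {p | M.Edge p v}) := by
  intro z z' hzz'
  refine sum_congr rfl fun c _ => ?_
  rw [hzz' v (.inl rfl), hg v z z' c fun p hp => hzz' p (.inr hp)]

theorem kernel_of_eq_const (w : ∀ v, M.ExoDom v → ℝ) {g} {v : V} {x : M.Dom v}
    (hgv : g v = fun _ _ => x) (z : ∀ p, M.Dom p) :
    M.kernel w g v z = if z v = x then ∑ c, w v c else 0 := by
  simp only [kernel, hgv]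
  split_ifs <;> simp_all

/-- Freezing the nodes outside a parent-closed set `A` does not change the solution on `A`, and
makes the kernels of the frozen nodes trivial. -/
def truncDo (d : M.Dom M.D) (A : Set V) : M.Equations :=
  M.doSet (M.gpol fun _ _ => d) Aᶜ M.dflt

theorem truncDo_of_mem (d : M.Dom M.D) {A : Set V} {v : V} (hv : v ∈ A) :
    M.truncDo d A v = M.gpol (fun _ _ => d) v := by
  simp [truncDo, doSet, hv]

theorem truncDo_of_notMem (d : M.Dom M.D) {A : Set V} {v : V} (hv : v ∉ A) :
    M.truncDo d A v = fun _ _ => M.dflt v := by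
  simp [truncDo, doSet, hv]

theorem isLocal_truncDo (d : M.Dom M.D) (A : Set V) : M.IsLocal (M.truncDo d A) := by
  intro v a a' e hv
  by_cases hvA : v ∈ A
  · rw [M.truncDo_of_mem d hvA]
    exact M.isLocal_gpol (M.isPolicy_const d) v a a' e hv
  · rw [M.truncDo_of_notMem d hvA]

def eventWeight (e : M.ExoDom M.D) : ∀ v, M.ExoDom v → ℝ :=
  update M.P M.D fun c => if c = e then M.P M.D c else 0

theorem prod_eventWeight (e : M.ExoDom M.D) (ε : ∀ v, M.ExoDom v) :
    ∏ v, M.eventWeight e v (ε v) = M.Pjoint ε * if ε M.D = e then 1 else 0 := by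
  rw [Pjoint, ← mul_prod_erase _ _ (mem_univ M.D), ← mul_prod_erase _ _ (mem_univ M.D),
    prod_congr rfl fun v hv => by rw [eventWeight, update_of_ne (ne_of_mem_erase hv)]]
  simp only [eventWeight, update_self]
  split_ifs <;> ring

theorem sum_eventWeight_D (e : M.ExoDom M.D) : ∑ c, M.eventWeight e M.D c = M.P M.D e := by
  simp [eventWeight]

def expectDo (e : M.ExoDom M.D) (d : M.Dom M.D) (h : (∀ v, M.Dom v) → ℝ) : ℝ :=
  ∑ ε, M.Pjoint ε * ((if ε M.D = e then 1 else 0) * h (M.solDo d ε))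

theorem expectDo_eq_sum_kernel (e : M.ExoDom M.D) (d : M.Dom M.D) {A : Set V}
    (hA : ∀ p v, M.Edge p v → v ∈ A → p ∈ A) {h : (∀ v, M.Dom v) → ℝ}
    (hh : DependsOn h A) :
    M.expectDo e d h = ∑ z, (∏ v, M.kernel (M.eventWeight e) (M.truncDo d A) v z) * h z := by
  rw [← M.sum_prod_mul_sol _ (M.isLocal_truncDo d A)]
  refine sum_congr rfl fun ε _ => ?_
  rw [prod_eventWeight, mul_assoc]
  congr 2
  exact hh fun v hv => M.sol_eq_sol_of_eqOn (M.isLocal_gpol (M.isPolicy_const d))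
    (M.isLocal_truncDo d A) hA (fun w hw => (M.truncDo_of_mem d hw).symm) ε hv

def otherObs (X : V) : Set V := {p | M.Edge p M.D ∧ p ≠ X}

def sepSet (X : V) : Set V := {v | (M.Edge v M.D ∧ v ≠ X) ∨ v = M.D}

def downstreamUtil : Set V := {u | u ∈ M.Util ∧ Relation.ReflTransGen M.Edge M.D u}

/-- Freeze the non-ancestral nodes, then send the kernel of every other node but `D` to the side
of the moral separator `W` that contains its family. -/
theorem exists_factorization {X : V} (hXpa : M.Edge X M.D)
    (hsep : DSep M.Edge {X} M.downstreamUtil (M.sepSet X)) (e : M.ExoDom M.D) (d : M.Dom M.D) :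
    ∃ (W : Set V) (a b : (∀ v, M.Dom v) → ℝ),
      X ∈ W ∧ (∀ u ∈ M.downstreamUtil, u ∉ W) ∧
      DependsOn a (W ∪ M.sepSet X) ∧ DependsOn b Wᶜ ∧
      ∀ h, DependsOn h (ancestors M.Edge (M.sepSet X ∪ M.downstreamUtil)) →
        M.expectDo e d h = ∑ z, (if z M.D = d then M.P M.D e else 0) * a z * b z * h z := by
  set A := ancestors M.Edge (M.sepSet X ∪ M.downstreamUtil)
  have hA : ∀ p v, M.Edge p v → v ∈ A → p ∈ A := fun _ _ => mem_ancestors_of_edge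
  have hDA : M.D ∈ A := ⟨M.D, .inl (.inr rfl), .refl⟩
  have hXS : X ∉ M.sepSet X := by
    rintro (⟨-, h⟩ | h)
    exacts [h rfl, M.ne_of_edge hXpa h]
  obtain ⟨W, hXW, hWA, hWU, hsplit⟩ :=
    exists_moral_separator M.acyclic hsep hXS ⟨M.D, .inl (.inr rfl), .single hXpa⟩
  set κ := M.kernel (M.eventWeight e) (M.truncDo d A)
  have hκ : ∀ v, DependsOn (κ v) (W ∪ M.sepSet X) ∨ DependsOn (κ v) Wᶜ := fun v => by
    by_cases hvA : v ∈ A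
    · exact (hsplit v hvA).imp (M.dependsOn_kernel _ (M.isLocal_truncDo d A) v).mono
        (M.dependsOn_kernel _ (M.isLocal_truncDo d A) v).mono
    · refine .inr fun z z' hzz' => ?_
      simp only [κ, M.kernel_of_eq_const _ (M.truncDo_of_notMem d hvA),
        hzz' v fun hvW => hvA (hWA hvW).1]
  have hκD : ∀ z, M.kernel (M.eventWeight e) (M.truncDo d A) M.D z =
      if z M.D = d then M.P M.D e else 0 := fun z => by
    rw [M.kernel_of_eq_const _ ((M.truncDo_of_mem d hDA).trans (M.gpol_self _)),
      sum_eventWeight_D]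
  let onW (v : V) : Prop := DependsOn (κ v) (W ∪ M.sepSet X)
  refine ⟨W, fun z => ∏ v ∈ univ.erase M.D with onW v, κ v z,
    fun z => ∏ v ∈ univ.erase M.D with ¬ onW v, κ v z, hXW, hWU,
    dependsOn_prod fun v hv => (mem_filter.1 hv).2,
    dependsOn_prod fun v hv => (hκ v).resolve_left (mem_filter.1 hv).2, fun h hh => ?_⟩
  rw [M.expectDo_eq_sum_kernel e d hA hh]
  refine sum_congr rfl fun z _ => ?_
  rw [← mul_prod_erase _ _ (mem_univ M.D), ← prod_filter_mul_prod_filter_not _ onW, hκD]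
  ring

/-- Given the other observations and `ε D = e`, under do(`D = d`) the observation `X` is
independent of the downstream utilities. -/
theorem expectDo_mul_expectDo_swap {X : V} (hXpa : M.Edge X M.D)
    (hsep : DSep M.Edge {X} M.downstreamUtil (M.sepSet X)) (e : M.ExoDom M.D) (d : M.Dom M.D)
    (y : ∀ v, M.Dom v) {α₁ α₂ β₁ β₂ : (∀ v, M.Dom v) → ℝ}
    (hα₁ : DependsOn α₁ {X}) (hα₂ : DependsOn α₂ {X})
    (hβ₁ : DependsOn β₁ M.downstreamUtil) (hβ₂ : DependsOn β₂ M.downstreamUtil) :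
    M.expectDo e d (fun z => agreeInd (M.otherObs X) y z * α₁ z * β₁ z) *
        M.expectDo e d (fun z => agreeInd (M.otherObs X) y z * α₂ z * β₂ z) =
      M.expectDo e d (fun z => agreeInd (M.otherObs X) y z * α₂ z * β₁ z) *
        M.expectDo e d (fun z => agreeInd (M.otherObs X) y z * α₁ z * β₂ z) := by
  obtain ⟨W, a, b, hXW, hWU, ha, hb, hfactor⟩ := M.exists_factorization hXpa hsep e d
  set A := ancestors M.Edge (M.sepSet X ∪ M.downstreamUtil)
  set I := agreeInd (M.otherObs X) y
  have hIS : DependsOn I (M.sepSet X) := (dependsOn_agreeInd _ y).mono fun _ => .inl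
  set G : (∀ v, M.Dom v) → ℝ := fun z => (if z M.D = d then M.P M.D e else 0) * I z
  have hG : DependsOn G (M.sepSet X) :=
    DependsOn.mul (fun z z' h => by simp only [h M.D (.inr rfl)]) hIS
  have hpin : ∀ z z', G z ≠ 0 → G z' ≠ 0 → ∀ v ∈ M.sepSet X, z v = z' v := by
    have hG0 : ∀ z, G z ≠ 0 → z M.D = d ∧ ∀ p ∈ M.otherObs X, z p = y p := by
      intro z hz
      by_contra! h
      refine hz ?_
      by_cases hzD : z M.D = d
      · simp [G, I, agreeInd, hzD, h hzD]
      · simp [G, hzD]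
    intro z z' hz hz' v hv
    obtain ⟨hzD, hzy⟩ := hG0 z hz
    obtain ⟨hz'D, hz'y⟩ := hG0 z' hz'
    rcases hv with hv | rfl
    exacts [(hzy v hv).trans (hz'y v hv).symm, hzD.trans hz'D.symm]
  have hαA : ∀ {α : (∀ v, M.Dom v) → ℝ}, DependsOn α {X} →
      DependsOn α (W ∪ M.sepSet X) :=
    fun h => h.mono fun _ hv => .inl (Set.mem_singleton_iff.1 hv ▸ hXW)
  have hβA : ∀ {β : (∀ v, M.Dom v) → ℝ}, DependsOn β M.downstreamUtil →
      DependsOn β Wᶜ :=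
    fun h => h.mono fun u hu => hWU u hu
  have hexpect : ∀ {α β : (∀ v, M.Dom v) → ℝ}, DependsOn α {X} →
      DependsOn β M.downstreamUtil →
      M.expectDo e d (fun z => I z * α z * β z) = ∑ z, G z * (a z * α z) * (b z * β z) := by
    intro α β hα hβ
    have hdep : DependsOn (fun z => I z * α z * β z) A := by
      refine ((hIS.mono fun v hv => ?_).mul (hα.mono fun v hv => ?_)).mul (hβ.mono fun v hv => ?_)
      · exact ⟨v, .inl hv, .refl⟩
      · exact ⟨M.D, .inl (.inr rfl), Set.mem_singleton_iff.1 hv ▸ .single hXpa⟩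
      · exact ⟨v, .inr hv, .refl⟩
    rw [hfactor _ hdep]
    exact sum_congr rfl fun z _ => by ring
  rw [hexpect hα₁ hβ₁, hexpect hα₂ hβ₂, hexpect hα₂ hβ₁, hexpect hα₁ hβ₂]
  exact sum_mul_sum_swap W (M.sepSet X) hG hpin (ha.mul (hαA hα₁)) (ha.mul (hαA hα₂))
    (hb.mul (hβA hβ₁)) (hb.mul (hβA hβ₂))

theorem pjoint_nonneg (ε : ∀ v, M.ExoDom v) : 0 ≤ M.Pjoint ε :=
  prod_nonneg fun v _ => M.Pnonneg v (ε v)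

theorem expectDo_nonneg (e : M.ExoDom M.D) (d : M.Dom M.D) {h : (∀ v, M.Dom v) → ℝ}
    (hh : ∀ z, 0 ≤ h z) : 0 ≤ M.expectDo e d h :=
  sum_nonneg fun ε _ =>
    mul_nonneg (M.pjoint_nonneg ε) (mul_nonneg (by split_ifs <;> norm_num) (hh _))

theorem expectDo_mul_eq_zero (e : M.ExoDom M.D) (d : M.Dom M.D) {h : (∀ v, M.Dom v) → ℝ}
    (hh : ∀ z, 0 ≤ h z) (h0 : M.expectDo e d h = 0) (φ : (∀ v, M.Dom v) → ℝ) :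
    M.expectDo e d (fun z => h z * φ z) = 0 := by
  have hterm := (sum_eq_zero_iff_of_nonneg fun ε _ =>
    mul_nonneg (M.pjoint_nonneg ε) (mul_nonneg (by split_ifs <;> norm_num) (hh _))).1 h0
  refine sum_eq_zero fun ε hε => ?_
  rw [show M.Pjoint ε * ((if ε M.D = e then 1 else 0) * (h (M.solDo d ε) * φ (M.solDo d ε))) =
    M.Pjoint ε * ((if ε M.D = e then 1 else 0) * h (M.solDo d ε)) * φ (M.solDo d ε) by ring,
    hterm ε hε, zero_mul]

theorem expectDo_congr_of_not_desc (e : M.ExoDom M.D) (d d' : M.Dom M.D)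
    {h : (∀ v, M.Dom v) → ℝ} (hh : DependsOn h {v | ¬ Relation.ReflTransGen M.Edge M.D v}) :
    M.expectDo e d h = M.expectDo e d' h :=
  sum_congr rfl fun ε _ => by rw [hh fun v hv => M.solDo_eq_of_not_desc d d' ε hv]

theorem otherObs_subset_not_desc (X : V) :
    M.otherObs X ⊆ {v | ¬ Relation.ReflTransGen M.Edge M.D v} :=
  fun _ hp => M.not_desc_of_edge_D hp.1

def upstreamU (z : ∀ v, M.Dom v) : ℝ :=
  ∑ u ∈ M.Util with ¬ Relation.ReflTransGen M.Edge M.D u, M.utilReal u (z u)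

def downstreamU (z : ∀ v, M.Dom v) : ℝ :=
  ∑ u ∈ M.Util with Relation.ReflTransGen M.Edge M.D u, M.utilReal u (z u)

theorem dependsOn_downstreamU : DependsOn M.downstreamU M.downstreamUtil :=
  fun _ _ h => sum_congr rfl fun u hu => by rw [h u (mem_filter.1 hu)]

theorem upstreamU_solDo (d d' : M.Dom M.D) (ε : ∀ v, M.ExoDom v) :
    M.upstreamU (M.solDo d ε) = M.upstreamU (M.solDo d' ε) :=
  sum_congr rfl fun u hu => by rw [M.solDo_eq_of_not_desc d d' ε (mem_filter.1 hu).2]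

theorem EU_eq_add {σ} (hσ : M.IsPolicy σ) (d₀ : M.Dom M.D) :
    M.EU σ = ∑ ε, M.Pjoint ε * M.upstreamU (M.solDo d₀ ε) +
      ∑ ε, M.Pjoint ε * M.downstreamU (M.solDo (σ (M.solDo d₀ ε) (ε M.D)) ε) := by
  rw [EU, EUg, exoElems, ← sum_add_distrib]
  refine sum_congr rfl fun ε _ => ?_
  rw [M.sol_gpol_eq_solDo hσ d₀, TotalU, ← sum_filter_add_sum_filter_not _
    (Relation.ReflTransGen M.Edge M.D), add_comm, mul_add]
  exact congrArg₂ _ (congrArg _ (M.upstreamU_solDo _ d₀ ε)) rfl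

def jointValue (X : V) (e : M.ExoDom M.D) (y : ∀ v, M.Dom v) (x : M.Dom X) (d : M.Dom M.D) :
    ℝ :=
  M.expectDo e d fun z =>
    agreeInd (M.otherObs X) y z * (if z X = x then 1 else 0) * M.downstreamU z

def ctxValue (X : V) (e : M.ExoDom M.D) (y : ∀ v, M.Dom v) (d : M.Dom M.D) : ℝ :=
  M.expectDo e d fun z => agreeInd (M.otherObs X) y z * M.downstreamU z

/-- By the conditional independence, `jointValue X e y x d` is `ctxValue X e y d` times the
conditional probability of `X = x` in the context, which does not depend on `d`. -/
theorem sum_jointValue_le {X : V} (hXpa : M.Edge X M.D)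
    (hsep : DSep M.Edge {X} M.downstreamUtil (M.sepSet X)) (e : M.ExoDom M.D)
    (y : ∀ v, M.Dom v) (dx : M.Dom X → M.Dom M.D) (d : M.Dom M.D)
    (hd : ∀ x, M.ctxValue X e y (dx x) ≤ M.ctxValue X e y d) :
    ∑ x, M.jointValue X e y x (dx x) ≤ ∑ x, M.jointValue X e y x d := by
  set I := agreeInd (M.otherObs X) y
  have hI : ∀ z, 0 ≤ I z := agreeInd_nonneg _ y
  have hIX : ∀ x : M.Dom X, ∀ z, 0 ≤ I z * if z X = x then 1 else 0 := fun x z =>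
    mul_nonneg (hI z) (by split_ifs <;> norm_num)
  have hnd : ∀ x : M.Dom X, DependsOn (fun z => I z * if z X = x then 1 else 0)
      {v | ¬ Relation.ReflTransGen M.Edge M.D v} :=
    fun x => ((dependsOn_agreeInd _ y).mono (M.otherObs_subset_not_desc X)).mul
      fun z z' h => by rw [h X (M.not_desc_of_edge_D hXpa)]
  set mass : M.Dom X → ℝ := fun x => M.expectDo e d fun z => I z * if z X = x then 1 else 0
  set N := M.expectDo e d I
  have hN : ∀ d', M.expectDo e d' I = N := fun d' => M.expectDo_congr_of_not_desc e d' d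
    ((dependsOn_agreeInd _ y).mono (M.otherObs_subset_not_desc X))
  have hmass : ∀ d' x, M.expectDo e d' (fun z => I z * if z X = x then 1 else 0) = mass x :=
    fun d' x => M.expectDo_congr_of_not_desc e d' d (hnd x)
  have hCI : ∀ x d', M.jointValue X e y x d' * N = M.ctxValue X e y d' * mass x := by
    intro x d'
    have h := M.expectDo_mul_expectDo_swap hXpa hsep e d' y
      (α₁ := fun z => if z X = x then 1 else 0) (α₂ := fun _ => 1) (β₂ := fun _ => 1)
      (fun z z' h => by simp only [h X rfl]) (dependsOn_const _ |>.mono (Set.empty_subset _))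
      M.dependsOn_downstreamU (dependsOn_const _ |>.mono (Set.empty_subset _))
    simp only [mul_one] at h
    rw [← hN d', ← hmass d' x]
    exact h
  rcases (M.expectDo_nonneg e d hI).eq_or_lt with hN0 | hNpos
  · have hzero : ∀ x d', M.jointValue X e y x d' = 0 := fun x d' => by
      simpa only [jointValue, mul_assoc] using M.expectDo_mul_eq_zero e d' hI
        ((hN d').trans hN0.symm) fun z => (if z X = x then 1 else 0) * M.downstreamU z
    simp [hzero]
  refine le_of_mul_le_mul_right ?_ hNpos
  calc (∑ x, M.jointValue X e y x (dx x)) * N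
      = ∑ x, M.ctxValue X e y (dx x) * mass x := by
        rw [sum_mul]
        exact sum_congr rfl fun x _ => hCI x _
    _ ≤ ∑ x, M.ctxValue X e y d * mass x :=
      sum_le_sum fun x _ => mul_le_mul_of_nonneg_right (hd x) (M.expectDo_nonneg e d (hIX x))
    _ = (∑ x, M.jointValue X e y x d) * N := by
        rw [sum_mul]
        exact sum_congr rfl fun x _ => (hCI x d).symm

theorem apply_update_eq_of_agree {σ} (hσ : M.IsPolicy σ) {X : V} {a y : ∀ v, M.Dom v}
    (h : ∀ p ∈ M.otherObs X, a p = y p) (e : M.ExoDom M.D) :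
    σ (update y X (a X)) e = σ a e := by
  refine hσ _ _ e fun p hp => ?_
  by_cases hpX : p = X
  · subst hpX
    exact update_self ..
  · rw [update_of_ne hpX]
    exact (h p ⟨hp, hpX⟩).symm

/-- Each context of the other observations is counted once for each of its completions `y`,
whence the factor on the left. -/
theorem card_mul_sum_downstreamU_eq {X : V} (hXpa : M.Edge X M.D) {σ} (hσ : M.IsPolicy σ)
    (d₀ : M.Dom M.D) :
    (∏ v, if v ∈ M.otherObs X then 1 else (Fintype.card (M.Dom v) : ℝ)) *
        ∑ ε, M.Pjoint ε * M.downstreamU (M.solDo (σ (M.solDo d₀ ε) (ε M.D)) ε) =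
      ∑ y, ∑ e, ∑ x, M.jointValue X e y x (σ (update y X x) e) := by
  have hsplit : ∀ y ε, agreeInd (M.otherObs X) y (M.solDo d₀ ε) *
      (M.Pjoint ε * M.downstreamU (M.solDo (σ (M.solDo d₀ ε) (ε M.D)) ε)) =
      ∑ e, ∑ x, M.Pjoint ε * ((if ε M.D = e then 1 else 0) *
        (agreeInd (M.otherObs X) y (M.solDo (σ (update y X x) e) ε) *
          (if M.solDo (σ (update y X x) e) ε X = x then 1 else 0) *
          M.downstreamU (M.solDo (σ (update y X x) e) ε))) := by
    intro y ε
    have hagree : ∀ d, agreeInd (M.otherObs X) y (M.solDo d ε) =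
        agreeInd (M.otherObs X) y (M.solDo d₀ ε) := fun d =>
      (dependsOn_agreeInd _ y).mono (M.otherObs_subset_not_desc X)
        fun v hv => M.solDo_eq_of_not_desc d d₀ ε hv
    have hX : ∀ d, M.solDo d ε X = M.solDo d₀ ε X := fun d =>
      M.solDo_eq_of_not_desc d d₀ ε (M.not_desc_of_edge_D hXpa)
    simp only [hagree, hX, mul_ite, ite_mul, mul_one, one_mul, mul_zero, zero_mul, sum_ite_eq,
      mem_univ, if_true]
    unfold agreeInd
    split_ifs with h
    · rw [M.apply_update_eq_of_agree hσ h]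
      ring
    · ring
  calc (∏ v, if v ∈ M.otherObs X then 1 else (Fintype.card (M.Dom v) : ℝ)) *
        ∑ ε, M.Pjoint ε * M.downstreamU (M.solDo (σ (M.solDo d₀ ε) (ε M.D)) ε)
      = ∑ ε, ∑ y, agreeInd (M.otherObs X) y (M.solDo d₀ ε) *
          (M.Pjoint ε * M.downstreamU (M.solDo (σ (M.solDo d₀ ε) (ε M.D)) ε)) := by
        rw [mul_sum]
        exact sum_congr rfl fun ε _ => by rw [← sum_agreeInd _ (M.solDo d₀ ε), sum_mul]
    _ = ∑ y, ∑ e, ∑ x, M.jointValue X e y x (σ (update y X x) e) := by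
        rw [sum_comm]
        refine sum_congr rfl fun y _ => ?_
        simp only [hsplit, jointValue, expectDo]
        rw [sum_comm]
        exact sum_congr rfl fun e _ => sum_comm

def improvedPolicy (X : V) (π : M.DecisionRule) : M.DecisionRule := fun a e =>
  π (update a X (Finite.exists_max fun x => M.ctxValue X e a (π (update a X x) e)).choose) e

theorem ctxValue_le_improvedPolicy (X : V) (π : M.DecisionRule)
    (e : M.ExoDom M.D) (y : ∀ v, M.Dom v) (x : M.Dom X) :
    M.ctxValue X e y (π (update y X x) e) ≤ M.ctxValue X e y (M.improvedPolicy X π y e) :=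
  (Finite.exists_max fun x => M.ctxValue X e y (π (update y X x) e)).choose_spec x

theorem isPolicyWithout_improvedPolicy (X : V) {π} (hπ : M.IsPolicy π) :
    M.IsPolicyWithout X (M.improvedPolicy X π) := by
  suffices h : ∀ a a' e, (∀ p, M.Edge p M.D → p ≠ X → a p = a' p) →
      M.improvedPolicy X π a e = M.improvedPolicy X π a' e from
    ⟨fun a a' e haa' => h a a' e fun p hp _ => haa' p hp, h⟩
  intro a a' e haa'
  have hupdate : ∀ x, π (update a X x) e = π (update a' X x) e := fun x =>
    hπ _ _ e fun p hp => by
      by_cases hpX : p = X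
      · subst hpX
        simp
      · simp only [update_of_ne hpX, haa' p hp hpX]
  have hctx : M.ctxValue X e a = M.ctxValue X e a' := by
    ext d
    simp only [ctxValue, agreeInd_congr (T := M.otherObs X) fun p hp => haa' p hp.1 hp.2]
  simp only [improvedPolicy, hupdate, hctx]

end SCIM

/-- nonrequisite observation soundness: if the observation
`X ∈ Pa_D` is d-separated from the downstream utilities `𝒰 ∩ Desc(D)` given
`(Pa_D ∪ {D}) \ {X}`, then every policy is weakly dominated by a policy not
using the link `X → D`; i.e. removing the link does not decrease the maximum
attainable expected utility. -/
theorem nonrequisite_soundness {V : Type} [Fintype V] [DecidableEq V]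
    (M : SCIM V) (X : V) (hXpa : M.Edge X M.D)
    (hsep : DSep M.Edge {X}
      {u | u ∈ M.Util ∧ Relation.ReflTransGen M.Edge M.D u}
      {v | (M.Edge v M.D ∧ v ≠ X) ∨ v = M.D}) :
    ∀ π, M.IsPolicy π → ∃ π', M.IsPolicyWithout X π' ∧ M.EU π ≤ M.EU π' := by
  intro π hπ
  have hπ' := M.isPolicyWithout_improvedPolicy X hπ
  refine ⟨M.improvedPolicy X π, hπ', ?_⟩
  rw [M.EU_eq_add hπ (M.dflt M.D), M.EU_eq_add hπ'.1 (M.dflt M.D), add_le_add_iff_left]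
  have hK : 0 < ∏ v, if v ∈ M.otherObs X then 1 else (Fintype.card (M.Dom v) : ℝ) :=
    prod_pos fun v _ => by split_ifs <;> simp [Fintype.card_pos]
  refine le_of_mul_le_mul_left ?_ hK
  rw [M.card_mul_sum_downstreamU_eq hXpa hπ, M.card_mul_sum_downstreamU_eq hXpa hπ'.1]
  refine sum_le_sum fun y _ => sum_le_sum fun e _ => ?_
  have hignore : ∀ x, M.improvedPolicy X π (update y X x) e = M.improvedPolicy X π y e :=
    fun x => hπ'.2 _ _ e fun p _ hpX => update_of_ne hpX _ _
  simp only [hignore]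
  exact M.sum_jointValue_le hXpa hsep e y _ _ (M.ctxValue_le_improvedPolicy X π e y)
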